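/- Fix α ∈ (0,1). For n ≥ 2 let k = k(n) = ⌊((α/2)·log₃ n)^{1/2}⌋, u = u(n) = 1/(√(π n)·3^k), and r = u·3^k. Let x_1,…,x_n be n points drawn independently and uniformly at random from [0,1]². Then there is a constant C > 0 such that, for all sufficiently large n, the conditional probability that {x_1,…,x_n} contains a Zeno configuration of size k with scale u centered at x_1, given that x_1 ∈ [r, 1−r]², is at least C·3^{−2k(k−1)}, and hence is Ω(n^{−α}). -/

import Mathlib

open MeasureTheory Filter
open scoped Classical

noncomputable section

/-- Points in `d`-dimensional Euclidean space. -/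
abbrev Pt (d : ℕ) : Type := EuclideanSpace ℝ (Fin d)

/-- The transmission radius of vertex `i` in the graph `G` on the points `x`:
the distance to its furthest neighbour (`0` if `i` is isolated). -/
noncomputable def rad {d n : ℕ} (x : Fin n → Pt d) (G : SimpleGraph (Fin n)) (i : Fin n) : ℝ :=
  ((Finset.univ.filter fun j => G.Adj i j).sup fun j =>
    (⟨dist (x i) (x j), dist_nonneg⟩ : NNReal) : NNReal)

/-- The interference at a point `p` caused by the graph `G` on the points `x`:
the number of balls `B(x i, rad x G i)` containing `p`. -/
noncomputable def interAt {d n : ℕ} (x : Fin n → Pt d) (G : SimpleGraph (Fin n)) (p : Pt d) : ℕ :=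
  (Finset.univ.filter fun i => dist p (x i) ≤ rad x G i).card

/-- The (maximum receiver-centric) interference of `G`:
the maximum interference at a vertex. -/
noncomputable def interG {d n : ℕ} (x : Fin n → Pt d) (G : SimpleGraph (Fin n)) : ℕ :=
  Finset.univ.sup fun i => interAt x G (x i)

/-- Total Euclidean edge length of `G` on the points `x`. -/
noncomputable def tlen {d n : ℕ} (x : Fin n → Pt d) (G : SimpleGraph (Fin n)) : ℝ :=
  ∑ e ∈ G.edgeFinset, Sym2.lift ⟨fun i j => dist (x i) (x j), fun i j => dist_comm _ _⟩ e

/-- `G` is a minimum spanning tree of the points `x`: a connected graph on the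
vertex set of minimum total Euclidean edge length. -/
def IsMST {d n : ℕ} (x : Fin n → Pt d) (G : SimpleGraph (Fin n)) : Prop :=
  G.Connected ∧ ∀ H : SimpleGraph (Fin n), H.Connected → tlen x G ≤ tlen x H

/-- The unit cube `[0,1]^d`. -/
def cube (d : ℕ) : Set (Pt d) := {y | ∀ i, y i ∈ Set.Icc (0 : ℝ) 1}

/-- The uniform distribution on `[0,1]^d`. -/
noncomputable def unif (d : ℕ) : Measure (Pt d) := volume.restrict (cube d)

/-- The joint law of `n` i.i.d. uniform points in `[0,1]^d`. -/
noncomputable def iidUnif (d n : ℕ) : Measure (Fin n → Pt d) := Measure.pi fun _ => unif d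

/-- The center of the `i`-th small ball of a Zeno configuration with scale `u`
centered at `x`: the point `x + (u * 3 ^ i, 0)` for `i ≥ 1`, and `x` itself for `i = 0`. -/
noncomputable def zenoCenter (x : Pt 2) (u : ℝ) (i : ℕ) : Pt 2 :=
  if i = 0 then x else x + EuclideanSpace.single (0 : Fin 2) (u * 3 ^ i)

/-- The point family `p` contains a Zeno configuration of size `k` with scale `u > 0`
centered at `x`: there are `k` points, one in each closed ball `D i` of radius `u`
centered at `zenoCenter x u i`, and the big closed ball `D` of radius `u * 3 ^ k`
centered at `x` contains no other points of the family. -/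
def ContainsZeno {n : ℕ} (p : Fin n → Pt 2) (k : ℕ) (u : ℝ) (x : Pt 2) : Prop :=
  0 < u ∧ ∃ f : Fin k → Fin n, Function.Injective f ∧
    (∀ i : Fin k, dist (p (f i)) (zenoCenter x u (i : ℕ)) ≤ u) ∧
    (∀ j : Fin n, dist (p j) x ≤ u * 3 ^ k → ∃ i : Fin k, j = f i)

/-- The Zeno size parameter `k = ⌊((α/2) log₃ n)^(1/2)⌋`. -/
noncomputable def kpar (α : ℝ) (n : ℕ) : ℕ :=
  ⌊Real.sqrt (α / 2 * Real.logb 3 n)⌋₊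

/-- The Zeno scale parameter `u = 1 / (√(π n) * 3 ^ k)`. -/
noncomputable def upar (α : ℝ) (n : ℕ) : ℝ :=
  1 / (Real.sqrt (Real.pi * n) * 3 ^ kpar α n)

/-- The radius `r = u * 3 ^ k` of the big ball of the Zeno configuration. -/
noncomputable def rpar (α : ℝ) (n : ℕ) : ℝ := upar α n * 3 ^ kpar α n


/-!
Condition on the first point `a = x 0` lying in `[r, 1 - r]²`, so that the big ball `D` around it
lies in the unit square. For every injective assignment `σ` of the small balls `D_1, …, D_(k-1)`
to `k - 1` of the other `n - 1` points, the event that these points land in their balls while all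
remaining points avoid `D` has conditional probability `(π u²)^(k-1) (1 - π r²)^(n-k)`, whatever
`a` is, and these events are disjoint because the small balls are. There are
`(n-1)(n-2)⋯(n-k+1) ≥ n^(k-1)/2` assignments (Bernoulli, as `2k² ≤ n`); with `π u² = 1/(n 9^k)`
and `(1 - 1/n)^(n-1) ≥ e⁻¹` the sum is at least `e⁻¹/2 · 3^(-2k(k-1))`. Finally
`2k² ≤ α log₃ n` makes this at least `e⁻¹/2 · n^(-α)`.
-/

open Metric Real

def box (d : ℕ) (a b : ℝ) : Set (Pt d) := {y | ∀ j, y j ∈ Set.Icc a b}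

lemma measurableSet_box (d : ℕ) (a b : ℝ) : MeasurableSet (box d a b) := by
  rw [box, Set.ofPred_forall]
  exact MeasurableSet.iInter fun j =>
    measurableSet_Icc.preimage (EuclideanSpace.proj (𝕜 := ℝ) j).continuous.measurable

lemma volume_box (d : ℕ) (a b : ℝ) : volume (box d a b) = ENNReal.ofReal (b - a) ^ d := by
  have hbox : box d a b =
      (MeasurableEquiv.toLp 2 (Fin d → ℝ)).symm ⁻¹' Set.univ.pi fun _ => Set.Icc a b := by
    ext y
    simp only [box, Set.mem_preimage, Set.mem_univ_pi, Set.mem_ofPred_eq]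
    rfl
  rw [hbox, (EuclideanSpace.volume_preserving_symm_measurableEquiv_toLp (Fin d)).measure_preimage
    (MeasurableSet.univ_pi fun _ => measurableSet_Icc).nullMeasurableSet, volume_pi_pi]
  simp [Real.volume_Icc]

lemma unif_box {d : ℕ} {a b : ℝ} (ha : 0 ≤ a) (hb : b ≤ 1) :
    unif d (box d a b) = ENNReal.ofReal (b - a) ^ d := by
  rw [unif, Measure.restrict_apply (measurableSet_box d a b), Set.inter_eq_left.2, volume_box]
  exact fun y hy j => ⟨ha.trans (hy j).1, (hy j).2.trans hb⟩

instance (d : ℕ) : IsProbabilityMeasure (unif d) :=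
  ⟨by rw [unif, Measure.restrict_apply_univ, show cube d = box d 0 1 from rfl, volume_box]; simp⟩

lemma closedBall_subset_cube {d : ℕ} {c : Pt d} {r : ℝ} (hc : c ∈ box d r (1 - r)) :
    closedBall c r ⊆ cube d := by
  intro y hy j
  have hj := abs_le.1 ((PiLp.dist_apply_le y c j).trans (mem_closedBall.1 hy))
  exact ⟨by linarith [(hc j).1], by linarith [(hc j).2]⟩

lemma unif_closedBall {c : Pt 2} {s : ℝ} (hs : 0 ≤ s) (h : closedBall c s ⊆ cube 2) :
    unif 2 (closedBall c s) = ENNReal.ofReal (π * s ^ 2) := by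
  rw [unif, Measure.restrict_apply measurableSet_closedBall, Set.inter_eq_left.2 h,
    EuclideanSpace.volume_closedBall_fin_two, ← ENNReal.ofReal_pow hs,
    ← ENNReal.ofReal_mul (by positivity), mul_comm]

lemma unif_compl_closedBall {c : Pt 2} {s : ℝ} (hs : 0 ≤ s) (h : closedBall c s ⊆ cube 2) :
    unif 2 (closedBall c s)ᶜ = ENNReal.ofReal (1 - π * s ^ 2) := by
  rw [measure_compl measurableSet_closedBall (measure_ne_top _ _), unif_closedBall hs h,
    measure_univ, ENNReal.ofReal_sub _ (by positivity), ENNReal.ofReal_one]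

lemma measure_pi_succ_eq_mul {α : Type*} [MeasurableSpace α] (μ : Measure α) [SigmaFinite μ]
    {m : ℕ} {B : Set α} (hB : MeasurableSet B) (A : α → Fin m → Set α)
    (hA : MeasurableSet {p : α × (Fin m → α) | ∀ j, p.2 j ∈ A p.1 j}) {c : ENNReal}
    (hc : ∀ a ∈ B, ∏ j, μ (A a j) = c) :
    Measure.pi (fun _ : Fin (m + 1) => μ) {x | x 0 ∈ B ∧ ∀ j, x j.succ ∈ A (x 0) j} = μ B * c := by
  set E : Set (α × (Fin m → α)) := {p | p.1 ∈ B ∧ ∀ j, p.2 j ∈ A p.1 j}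
  have hE : MeasurableSet E := (measurable_fst hB).inter hA
  have hpre : {x : Fin (m + 1) → α | x 0 ∈ B ∧ ∀ j, x j.succ ∈ A (x 0) j} =
      MeasurableEquiv.piFinSuccAbove (fun _ => α) 0 ⁻¹' E := by
    ext x
    simp [E, Fin.tail]
  have hslice (a : α) :
      Measure.pi (fun _ : Fin m => μ) (Prod.mk a ⁻¹' E) = B.indicator (fun _ => c) a := by
    by_cases ha : a ∈ B
    · have : Prod.mk a ⁻¹' E = Set.univ.pi (A a) := by ext y; simp [E, ha]
      rw [Set.indicator_of_mem ha, this, Measure.pi_pi, hc a ha]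
    · have : Prod.mk a ⁻¹' E = ∅ := by ext y; simp [E, ha]
      rw [Set.indicator_of_notMem ha, this, measure_empty]
  rw [hpre, (measurePreserving_piFinSuccAbove (fun _ => μ) 0).measure_preimage
    hE.nullMeasurableSet, Measure.prod_apply hE]
  simp_rw [hslice]
  rw [lintegral_indicator_const hB, mul_comm]

lemma dist_zenoCenter_succ (x : Pt 2) {u : ℝ} (hu : 0 ≤ u) (i : ℕ) :
    dist (zenoCenter x u (i + 1)) x = u * 3 ^ (i + 1) := by
  simp [zenoCenter, dist_eq_norm, PiLp.norm_single, abs_of_nonneg hu]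

lemma closedBall_zenoCenter_succ_subset (x : Pt 2) {u : ℝ} (hu : 0 ≤ u) {i k : ℕ}
    (hi : i + 1 < k) : closedBall (zenoCenter x u (i + 1)) u ⊆ closedBall x (u * 3 ^ k) := by
  refine closedBall_subset_closedBall' ?_
  rw [dist_zenoCenter_succ x hu]
  have : (3 : ℝ) ^ (i + 2) ≤ 3 ^ k := pow_le_pow_right₀ (by norm_num) hi
  nlinarith [pow_succ (3 : ℝ) (i + 1), one_le_pow₀ (M₀ := ℝ) (a := 3) (n := i + 1) (by norm_num)]

lemma disjoint_closedBall_zenoCenter_succ (x : Pt 2) {u : ℝ} (hu : 0 < u) {i i' : ℕ}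
    (h : i < i') :
    Disjoint (closedBall (zenoCenter x u (i + 1)) u) (closedBall (zenoCenter x u (i' + 1)) u) := by
  refine closedBall_disjoint_closedBall ?_
  have htri := dist_triangle (zenoCenter x u (i' + 1)) (zenoCenter x u (i + 1)) x
  rw [dist_zenoCenter_succ x hu.le, dist_zenoCenter_succ x hu.le, dist_comm] at htri
  have h3 : 3 * (u * 3 ^ (i + 1)) ≤ u * 3 ^ (i' + 1) := by
    rw [mul_left_comm, ← pow_succ']
    exact mul_le_mul_of_nonneg_left (pow_le_pow_right₀ (by norm_num) (by omega)) hu.le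
  have h1 : u * 3 ^ 1 ≤ u * 3 ^ (i + 1) :=
    mul_le_mul_of_nonneg_left (pow_le_pow_right₀ (by norm_num) (by omega)) hu.le
  linarith

-- `σ i` is the index, among the points other than `x 0`, of the point that lands in the small
-- ball `D_(i+1)`; the points outside the range of `σ` avoid the big ball `D`.
def zenoTarget (u : ℝ) (K : ℕ) {m : ℕ} (σ : Fin K ↪ Fin m) (x : Pt 2) (j : Fin m) :
    Set (Pt 2) :=
  if h : j ∈ Set.range σ then closedBall (zenoCenter x u (σ.invOfMemRange ⟨j, h⟩ + 1)) u
  else (closedBall x (u * 3 ^ (K + 1)))ᶜ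

def zenoEvent (u : ℝ) {K m : ℕ} (σ : Fin K ↪ Fin m) : Set (Fin (m + 1) → Pt 2) :=
  {x | x 0 ∈ box 2 (u * 3 ^ (K + 1)) (1 - u * 3 ^ (K + 1)) ∧
    ∀ j, x j.succ ∈ zenoTarget u K σ (x 0) j}

section ZenoEvent

variable {u : ℝ} {K m : ℕ}

lemma zenoTarget_apply (σ : Fin K ↪ Fin m) (x : Pt 2) (i : Fin K) :
    zenoTarget u K σ x (σ i) = closedBall (zenoCenter x u (i + 1)) u := by
  rw [zenoTarget, dif_pos (Set.mem_range_self i), σ.right_inv_of_invOfMemRange]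

lemma zenoTarget_of_notMem {σ : Fin K ↪ Fin m} (x : Pt 2) {j : Fin m} (hj : j ∉ Set.range σ) :
    zenoTarget u K σ x j = (closedBall x (u * 3 ^ (K + 1)))ᶜ :=
  dif_neg hj

lemma measurableSet_zenoTarget (σ : Fin K ↪ Fin m) :
    MeasurableSet {p : Pt 2 × (Fin m → Pt 2) | ∀ j, p.2 j ∈ zenoTarget u K σ p.1 j} := by
  rw [Set.ofPred_forall]
  refine MeasurableSet.iInter fun j => ?_
  by_cases hj : j ∈ Set.range σ
  · simp only [zenoTarget, dif_pos hj, mem_closedBall, zenoCenter, Nat.add_one_ne_zero,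
      if_false]
    apply measurableSet_le <;> fun_prop
  · simp only [zenoTarget, dif_neg hj, Set.mem_compl_iff, mem_closedBall, not_le]
    apply measurableSet_lt <;> fun_prop

lemma prod_unif_zenoTarget (hu : 0 ≤ u) (σ : Fin K ↪ Fin m) {x : Pt 2}
    (hx : x ∈ box 2 (u * 3 ^ (K + 1)) (1 - u * 3 ^ (K + 1))) :
    ∏ j, unif 2 (zenoTarget u K σ x j) =
      ENNReal.ofReal (π * u ^ 2) ^ K * ENNReal.ofReal (1 - π * (u * 3 ^ (K + 1)) ^ 2) ^ (m - K) := by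
  have hbig := closedBall_subset_cube hx
  rw [← Finset.prod_mul_prod_compl (Finset.univ.map σ)]
  congr 1
  · rw [Finset.prod_map, Finset.prod_eq_pow_card fun i _ => ?_, Finset.card_univ,
      Fintype.card_fin]
    rw [zenoTarget_apply, unif_closedBall hu
      ((closedBall_zenoCenter_succ_subset x hu (by omega)).trans hbig)]
  · rw [Finset.prod_eq_pow_card fun j hj => ?_, Finset.card_compl, Finset.card_map,
      Finset.card_univ, Fintype.card_fin, Fintype.card_fin]
    rw [zenoTarget_of_notMem x (by simpa using hj), unif_compl_closedBall (by positivity) hbig]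

lemma iidUnif_zenoEvent (hu : 0 ≤ u) (σ : Fin K ↪ Fin m) :
    iidUnif 2 (m + 1) (zenoEvent u σ) =
      unif 2 (box 2 (u * 3 ^ (K + 1)) (1 - u * 3 ^ (K + 1))) *
        (ENNReal.ofReal (π * u ^ 2) ^ K *
          ENNReal.ofReal (1 - π * (u * 3 ^ (K + 1)) ^ 2) ^ (m - K)) :=
  measure_pi_succ_eq_mul (unif 2) (measurableSet_box _ _ _) (zenoTarget u K σ)
    (measurableSet_zenoTarget σ) fun _ hx => prod_unif_zenoTarget hu σ hx

lemma zenoEvent_subset (hu : 0 < u) (σ : Fin K ↪ Fin m) :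
    zenoEvent u σ ⊆ {x | ContainsZeno x (K + 1) u (x 0)} := by
  rintro x ⟨-, hx⟩
  refine ⟨hu, Fin.cons 0 fun i => (σ i).succ, ?_, ?_, ?_⟩
  · refine Fin.cons_injective_iff.2 ⟨?_, (Fin.succ_injective _).comp σ.injective⟩
    rintro ⟨i, hi⟩
    exact Fin.succ_ne_zero _ hi
  · refine Fin.cases (by simp [zenoCenter, hu.le]) fun i => ?_
    simpa [zenoTarget_apply] using hx (σ i)
  · refine Fin.cases (fun _ => ⟨0, rfl⟩) fun j hj => ?_
    by_cases hjσ : j ∈ Set.range σ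
    · obtain ⟨i, rfl⟩ := hjσ
      exact ⟨i.succ, by simp⟩
    · have := hx j
      rw [zenoTarget_of_notMem _ hjσ] at this
      exact absurd (mem_closedBall.2 hj) this

lemma pairwise_disjoint_zenoEvent (hu : 0 < u) :
    Pairwise fun σ τ : Fin K ↪ Fin m => Disjoint (zenoEvent u σ) (zenoEvent u τ) := by
  intro σ τ hστ
  obtain ⟨i, hi⟩ : ∃ i, σ i ≠ τ i := by
    by_contra! h
    exact hστ (DFunLike.ext σ τ h)
  refine Set.disjoint_left.2 fun x ⟨_, hσ⟩ ⟨_, hτ⟩ => ?_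
  have hxσ := hσ (σ i)
  rw [zenoTarget_apply] at hxσ
  by_cases hj : σ i ∈ Set.range τ
  · obtain ⟨i', hi'⟩ := hj
    have hxτ := hτ (τ i')
    rw [zenoTarget_apply, hi'] at hxτ
    have hne : (i : ℕ) ≠ i' := fun h => hi (by rw [← hi', Fin.ext h])
    rcases hne.lt_or_gt with h | h
    · exact Set.disjoint_left.1 (disjoint_closedBall_zenoCenter_succ _ hu h) hxσ hxτ
    · exact Set.disjoint_left.1 (disjoint_closedBall_zenoCenter_succ _ hu h) hxτ hxσ
  · have hxτ := hτ (σ i)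
    rw [zenoTarget_of_notMem _ hj] at hxτ
    exact hxτ (closedBall_zenoCenter_succ_subset _ hu.le (by omega) hxσ)

lemma measurableSet_zenoEvent (σ : Fin K ↪ Fin m) : MeasurableSet (zenoEvent u σ) := by
  have hsplit : Measurable fun x : Fin (m + 1) → Pt 2 => (x 0, fun j : Fin m => x j.succ) := by
    fun_prop
  exact hsplit ((measurable_fst (measurableSet_box 2 _ _)).inter (measurableSet_zenoTarget σ))

theorem ofReal_le_cond_containsZeno (hu : 0 < u) (hR : u * 3 ^ (K + 1) < 1 / 2) :
    ENNReal.ofReal (m.descFactorial K *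
        ((π * u ^ 2) ^ K * (1 - π * (u * 3 ^ (K + 1)) ^ 2) ^ (m - K))) ≤
      ProbabilityTheory.cond (iidUnif 2 (m + 1))
        {x | x 0 ∈ box 2 (u * 3 ^ (K + 1)) (1 - u * 3 ^ (K + 1))}
        {x | ContainsZeno x (K + 1) u (x 0)} := by
  set R := u * 3 ^ (K + 1)
  set B := box 2 R (1 - R)
  have hR0 : 0 ≤ R := by positivity
  have hB : unif 2 B = ENNReal.ofReal (1 - 2 * R) ^ 2 := by
    rw [unif_box hR0 (by linarith)]
    ring_nf
  have hB0 : unif 2 B ≠ 0 := by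
    rw [hB]
    exact pow_ne_zero _ (ENNReal.ofReal_pos.2 (by linarith)).ne'
  have hS : MeasurableSet {x : Fin (m + 1) → Pt 2 | x 0 ∈ B} :=
    measurable_pi_apply 0 (measurableSet_box _ _ _)
  have hSB : iidUnif 2 (m + 1) {x | x 0 ∈ B} = unif 2 B :=
    (measurePreserving_eval (fun _ => unif 2) 0).measure_preimage
      (measurableSet_box _ _ _).nullMeasurableSet
  have hball : 0 ≤ 1 - π * R ^ 2 := by nlinarith [pi_lt_four]
  have hsum : ∑ σ : Fin K ↪ Fin m, iidUnif 2 (m + 1) (zenoEvent u σ) = unif 2 B *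
      ENNReal.ofReal (m.descFactorial K * ((π * u ^ 2) ^ K * (1 - π * R ^ 2) ^ (m - K))) := by
    simp_rw [iidUnif_zenoEvent hu.le]
    rw [Finset.sum_const, Finset.card_univ, Fintype.card_embedding_eq, Fintype.card_fin,
      Fintype.card_fin, nsmul_eq_mul, ENNReal.ofReal_mul (Nat.cast_nonneg _),
      ENNReal.ofReal_natCast, ENNReal.ofReal_mul (by positivity : (0 : ℝ) ≤ (π * u ^ 2) ^ K),
      ENNReal.ofReal_pow (by positivity : (0 : ℝ) ≤ π * u ^ 2), ENNReal.ofReal_pow hball,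
      mul_left_comm]
  rw [ProbabilityTheory.cond_apply hS, hSB]
  calc ENNReal.ofReal (m.descFactorial K * ((π * u ^ 2) ^ K * (1 - π * R ^ 2) ^ (m - K)))
      = (unif 2 B)⁻¹ * ∑ σ : Fin K ↪ Fin m, iidUnif 2 (m + 1) (zenoEvent u σ) := by
        rw [hsum, ENNReal.inv_mul_cancel_left hB0 (measure_ne_top _ _)]
    _ = (unif 2 B)⁻¹ * iidUnif 2 (m + 1) (⋃ σ : Fin K ↪ Fin m, zenoEvent u σ) := by
        rw [measure_iUnion (pairwise_disjoint_zenoEvent hu) measurableSet_zenoEvent, tsum_fintype]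
    _ ≤ _ := by
        gcongr
        exact Set.iUnion_subset fun σ =>
          Set.subset_inter (fun x hx => hx.1) (zenoEvent_subset hu σ)

end ZenoEvent

lemma pow_div_two_le_descFactorial {m K : ℕ} (h : 2 * K ^ 2 ≤ m + 1) :
    ((m + 1 : ℕ) : ℝ) ^ K / 2 ≤ m.descFactorial K := by
  set N : ℝ := ((m + 1 : ℕ) : ℝ)
  have hN : 0 < N := by positivity
  have hKN : 2 * (K : ℝ) ^ 2 ≤ N := by simp only [N]; exact_mod_cast h
  have hKK : (K : ℝ) ≤ K ^ 2 := by exact_mod_cast Nat.le_self_pow two_ne_zero K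
  have hKm : K ≤ m + 1 := by nlinarith
  have hbernoulli : 1 + K * (-(K / N)) ≤ (1 - K / N) ^ K := by
    rw [sub_eq_add_neg]
    exact one_add_mul_le_pow (by rw [neg_le_neg_iff, div_le_iff₀ hN]; linarith) K
  calc N ^ K / 2 ≤ N ^ K * (1 - K / N) ^ K := by
        rw [div_eq_mul_one_div]
        refine mul_le_mul_of_nonneg_left ?_ (by positivity)
        have : K * (K / N) ≤ 1 / 2 := by
          rw [mul_div_assoc', div_le_iff₀ hN]; linarith
        linarith
    _ = ((m + 1 - K : ℕ) : ℝ) ^ K := by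
        rw [← mul_pow, Nat.cast_sub hKm, mul_sub, mul_div_cancel₀ _ hN.ne', mul_one]
    _ ≤ m.descFactorial K := by exact_mod_cast Nat.pow_sub_le_descFactorial m K

lemma exp_neg_one_le_one_sub_inv_pow (m : ℕ) : rexp (-1) ≤ (1 - ((m + 1 : ℕ) : ℝ)⁻¹) ^ m := by
  rcases Nat.eq_zero_or_pos m with rfl | hm
  · simp
  have hinv : 1 - ((m + 1 : ℕ) : ℝ)⁻¹ = (1 + (m : ℝ)⁻¹)⁻¹ := by
    field_simp
    push_cast
    ring
  rw [hinv, inv_pow, exp_neg]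
  exact inv_anti₀ (by positivity) one_add_inv_pow_le_exp

lemma exp_neg_one_div_two_mul_pow_le {m K : ℕ} (h : 2 * K ^ 2 ≤ m + 1) {q : ℝ} (hq : 0 ≤ q) :
    rexp (-1) / 2 * q ^ K ≤ m.descFactorial K *
      ((((m + 1 : ℕ) : ℝ)⁻¹ * q) ^ K * (1 - ((m + 1 : ℕ) : ℝ)⁻¹) ^ (m - K)) := by
  set N : ℝ := ((m + 1 : ℕ) : ℝ)
  have hN : 0 < N := by positivity
  have hsmall : 0 ≤ 1 - N⁻¹ := sub_nonneg.2 (inv_le_one_of_one_le₀ (by simp [N]))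
  have hexp : rexp (-1) ≤ (1 - N⁻¹) ^ (m - K) :=
    (exp_neg_one_le_one_sub_inv_pow m).trans
      (pow_le_pow_of_le_one hsmall (sub_le_self _ (by positivity)) (Nat.sub_le m K))
  calc rexp (-1) / 2 * q ^ K = N ^ K / 2 * ((N⁻¹ * q) ^ K * rexp (-1)) := by
        rw [mul_pow, inv_pow]
        field_simp
    _ ≤ m.descFactorial K * ((N⁻¹ * q) ^ K * (1 - N⁻¹) ^ (m - K)) := by
        gcongr
        exact pow_div_two_le_descFactorial h

section Parameters

variable {α : ℝ} {n : ℕ}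

lemma upar_pos (hn : 0 < n) : 0 < upar α n := by
  unfold upar
  positivity

lemma pi_mul_rpar_sq (hn : 0 < n) : π * rpar α n ^ 2 = (n : ℝ)⁻¹ := by
  rw [rpar, upar, one_div, mul_inv, inv_mul_cancel_right₀ (by positivity), inv_pow,
    sq_sqrt (by positivity)]
  field_simp

lemma pi_mul_upar_sq (hn : 0 < n) : π * upar α n ^ 2 = (n : ℝ)⁻¹ * (9 ^ kpar α n)⁻¹ := by
  rw [upar, div_pow, mul_pow, sq_sqrt (by positivity), ← pow_mul, mul_comm (kpar α n),
    pow_mul]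
  field_simp
  norm_num

lemma rpar_lt_half (hn : 2 ≤ n) : rpar α n < 1 / 2 := by
  have hr := pi_mul_rpar_sq (α := α) (by omega : 0 < n)
  have hinv : (n : ℝ)⁻¹ ≤ 2⁻¹ := inv_anti₀ (by norm_num) (by exact_mod_cast hn)
  have hpos : 0 < rpar α n := mul_pos (upar_pos (by omega)) (by positivity)
  nlinarith [pi_gt_three]

lemma kpar_sq_le (hα : 0 ≤ α) (n : ℕ) : (kpar α n : ℝ) ^ 2 ≤ α / 2 * logb 3 n := by
  have hlog : 0 ≤ α / 2 * logb 3 n :=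
    mul_nonneg (by linarith) (div_nonneg (log_natCast_nonneg n) (log_nonneg (by norm_num)))
  calc (kpar α n : ℝ) ^ 2 ≤ sqrt (α / 2 * logb 3 n) ^ 2 :=
        pow_le_pow_left₀ (Nat.cast_nonneg _) (Nat.floor_le (sqrt_nonneg _)) 2
    _ = α / 2 * logb 3 n := sq_sqrt hlog

lemma two_mul_kpar_sq_le (hα₀ : 0 ≤ α) (hα₁ : α ≤ 1) (n : ℕ) : 2 * kpar α n ^ 2 ≤ n := by
  have hlog3 : 1 ≤ log 3 := by
    rw [le_log_iff_exp_le (by norm_num)]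
    exact exp_one_lt_d9.le.trans (by norm_num)
  have hlogb : logb 3 n ≤ n := (div_le_self (log_natCast_nonneg n) hlog3).trans
    (log_le_self (Nat.cast_nonneg n))
  have hlogb0 : 0 ≤ logb 3 n := div_nonneg (log_natCast_nonneg n) (by linarith)
  have hk := kpar_sq_le hα₀ n
  have hkn : 2 * (kpar α n : ℝ) ^ 2 ≤ n := by nlinarith
  exact_mod_cast hkn

lemma eventually_one_le_kpar (hα : 0 < α) : ∀ᶠ n : ℕ in atTop, 1 ≤ kpar α n := by
  have hlog : Tendsto (fun n : ℕ => logb 3 n) atTop atTop :=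
    (tendsto_logb_atTop (by norm_num)).comp tendsto_natCast_atTop_atTop
  filter_upwards [hlog.eventually_ge_atTop (2 / α)] with n hn
  refine Nat.le_floor ?_
  rw [Nat.cast_one, one_le_sqrt]
  calc (1 : ℝ) = α / 2 * (2 / α) := by field_simp
    _ ≤ α / 2 * logb 3 n := by gcongr

lemma three_rpow_eq_inv_nine_pow {k : ℕ} (hk : 1 ≤ k) :
    (3 : ℝ) ^ (-2 * (k : ℝ) * (k - 1)) = ((9 : ℝ) ^ k)⁻¹ ^ (k - 1) := by
  have hexp : -2 * (k : ℝ) * (k - 1) = -((2 * (k * (k - 1)) : ℕ) : ℝ) := by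
    push_cast [Nat.cast_sub hk]
    ring
  rw [hexp, rpow_neg (by norm_num), rpow_natCast, pow_mul, pow_mul, inv_pow]
  norm_num

lemma natCast_rpow_neg_le_three_rpow (hα : 0 ≤ α) (hn : 0 < n) :
    (n : ℝ) ^ (-α) ≤ (3 : ℝ) ^ (-2 * (kpar α n : ℝ) * (kpar α n - 1)) := by
  have hk := kpar_sq_le hα n
  rw [← rpow_logb (b := 3) (by norm_num) (by norm_num) (by positivity : (0 : ℝ) < n),
    ← rpow_mul (by norm_num), rpow_le_rpow_left_iff (by norm_num)]
  nlinarith [(Nat.cast_nonneg (kpar α n) : (0 : ℝ) ≤ _)]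

end Parameters

/-- For `n` i.i.d. uniform points in `[0,1]²`, the conditional probability that the
points contain a Zeno configuration of size `k` with scale `u` centered at the first
point, given that the first point lies in `[r, 1-r]²`, is at least
`C * 3 ^ (-2k(k-1))`, and hence at least `C' * n ^ (-α)`. -/
theorem zeno_conditional_probability (α : ℝ) (hα : α ∈ Set.Ioo (0 : ℝ) 1) :
    ∃ C : ℝ, 0 < C ∧ ∃ C' : ℝ, 0 < C' ∧
      ∀ᶠ n : ℕ in atTop, ∀ hn : 0 < n,
        ENNReal.ofReal
            (C * (3 : ℝ) ^ (-2 * (kpar α n : ℝ) * ((kpar α n : ℝ) - 1))) ≤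
          ProbabilityTheory.cond (iidUnif 2 n)
            {x | ∀ j : Fin 2, x ⟨0, hn⟩ j ∈ Set.Icc (rpar α n) (1 - rpar α n)}
            {x | ContainsZeno x (kpar α n) (upar α n) (x ⟨0, hn⟩)} ∧
        ENNReal.ofReal (C' * (n : ℝ) ^ (-α)) ≤
          ProbabilityTheory.cond (iidUnif 2 n)
            {x | ∀ j : Fin 2, x ⟨0, hn⟩ j ∈ Set.Icc (rpar α n) (1 - rpar α n)}
            {x | ContainsZeno x (kpar α n) (upar α n) (x ⟨0, hn⟩)} := by
  obtain ⟨hα₀, hα₁⟩ := hα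
  have hC : 0 < rexp (-1) / 2 := by positivity
  refine ⟨_, hC, _, hC, ?_⟩
  filter_upwards [eventually_one_le_kpar hα₀, eventually_ge_atTop 2] with n hk hn₂ hn
  have hbound : ENNReal.ofReal (rexp (-1) / 2 * (3 : ℝ) ^ (-2 * (kpar α n : ℝ) * (kpar α n - 1)))
      ≤ ProbabilityTheory.cond (iidUnif 2 n)
          {x | ∀ j : Fin 2, x ⟨0, hn⟩ j ∈ Set.Icc (rpar α n) (1 - rpar α n)}
          {x | ContainsZeno x (kpar α n) (upar α n) (x ⟨0, hn⟩)} := by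
    have hr := rpar_lt_half (α := α) hn₂
    have hr2 := pi_mul_rpar_sq (α := α) hn
    have hu2 := pi_mul_upar_sq (α := α) hn
    have hkn := two_mul_kpar_sq_le hα₀.le hα₁.le n
    obtain ⟨m, rfl⟩ : ∃ m, n = m + 1 := ⟨n - 1, by omega⟩
    obtain ⟨K, hK⟩ : ∃ K, kpar α (m + 1) = K + 1 := ⟨kpar α (m + 1) - 1, by omega⟩
    rw [three_rpow_eq_inv_nine_pow hk, show (⟨0, hn⟩ : Fin (m + 1)) = 0 from rfl, rpar, hK,
      Nat.add_sub_cancel]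
    rw [rpar, hK] at hr hr2
    rw [hK] at hu2 hkn
    refine le_trans (ENNReal.ofReal_le_ofReal ?_) (ofReal_le_cond_containsZeno (upar_pos hn) hr)
    rw [hu2, hr2]
    exact exp_neg_one_div_two_mul_pow_le (by nlinarith) (by positivity)
  exact ⟨hbound, (ENNReal.ofReal_le_ofReal
    (mul_le_mul_of_nonneg_left (natCast_rpow_neg_le_three_rpow hα₀.le hn) hC.le)).trans hbound⟩
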